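/- arXiv:2604.07608 — 2 statements merged into one kernel-verified Lean document; each statement's English description precedes it below -/
import Mathlib

section
/- The map A ↦ (1/θ) log tr(e^{θA}) is convex on the space of real symmetric n×n matrices, for any fixed θ > 0. -/
open Matrix

section Aux

variable {n : ℕ}

private lemma isHermitian_smul_real {A : Matrix (Fin n) (Fin n) ℝ} (hA : A.IsHermitian) (c : ℝ) :
    (c • A).IsHermitian := by
  unfold Matrix.IsHermitian at *
  rw [Matrix.conjTranspose_smul, hA]
  simp

/-- Trace of matrix exponential of a real symmetric matrix is the sum of exponentials of
eigenvalues. -/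
private lemma trace_exp_eq_sum_exp {M : Matrix (Fin n) (Fin n) ℝ} (hM : M.IsHermitian) :
    (NormedSpace.exp M).trace = ∑ i, Real.exp (hM.eigenvalues i) := by
  set U : Matrix (Fin n) (Fin n) ℝ := (hM.eigenvectorUnitary : Matrix (Fin n) (Fin n) ℝ)
    with hUdef
  have hU : U ∈ Matrix.unitaryGroup (Fin n) ℝ := hM.eigenvectorUnitary.2
  have h1 : U * star U = 1 := (Matrix.mem_unitaryGroup_iff).mp hU
  have h2 : star U * U = 1 := (Matrix.mem_unitaryGroup_iff').mp hU
  have hinv : U⁻¹ = star U := Matrix.inv_eq_left_inv h2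
  have hspec : M = U * Matrix.diagonal hM.eigenvalues * U⁻¹ := by
    rw [hinv]
    simpa [RCLike.ofReal_real_eq_id, Unitary.conjStarAlgAut_apply] using hM.spectral_theorem
  have hunit : IsUnit U := ⟨⟨U, star U, h1, h2⟩, rfl⟩
  have hconj : NormedSpace.exp (U * Matrix.diagonal hM.eigenvalues * U⁻¹)
      = U * NormedSpace.exp (Matrix.diagonal hM.eigenvalues) * U⁻¹ :=
    Matrix.exp_conj U _ hunit
  have hdiagexp : NormedSpace.exp (Matrix.diagonal hM.eigenvalues)
      = Matrix.diagonal (NormedSpace.exp hM.eigenvalues) := Matrix.exp_diagonal _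
  conv_lhs => rw [hspec]
  rw [hconj, hdiagexp, Matrix.trace_mul_comm, ← Matrix.mul_assoc, hinv, h2, Matrix.one_mul,
    Matrix.trace_diagonal]
  refine Finset.sum_congr rfl fun i _ => ?_
  exact (Pi.coe_exp hM.eigenvalues i).trans
    ((congrFun Real.exp_eq_exp_ℝ (hM.eigenvalues i)).symm)

/-- Peierls inequality: for a real symmetric matrix `M`,
`∑ i, exp (M i i) ≤ tr (exp M)`. -/
private lemma sum_exp_diag_le_trace_exp {M : Matrix (Fin n) (Fin n) ℝ}
    (hM : M.IsHermitian) :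
    ∑ i, Real.exp (M i i) ≤ (NormedSpace.exp M).trace := by
  rw [trace_exp_eq_sum_exp hM]
  set U : Matrix (Fin n) (Fin n) ℝ := (hM.eigenvectorUnitary : Matrix (Fin n) (Fin n) ℝ)
    with hUdef
  have hU : U ∈ Matrix.unitaryGroup (Fin n) ℝ := hM.eigenvectorUnitary.2
  have h1 : U * star U = 1 := (Matrix.mem_unitaryGroup_iff).mp hU
  have h2 : star U * U = 1 := (Matrix.mem_unitaryGroup_iff').mp hU
  have hrow : ∀ i, ∑ j, U i j * U i j = 1 := by
    intro i
    have := congrArg (fun N => N i i) h1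
    simpa [Matrix.mul_apply, Matrix.star_apply, Matrix.one_apply] using this
  have hcol : ∀ j, ∑ i, U i j * U i j = 1 := by
    intro j
    have := congrArg (fun N => N j j) h2
    simpa [Matrix.mul_apply, Matrix.star_apply, Matrix.one_apply] using this
  have hdiag : ∀ i, M i i = ∑ j, (U i j * U i j) * hM.eigenvalues j := by
    intro i
    conv_lhs => rw [hM.spectral_theorem, Unitary.conjStarAlgAut_apply]
    simp only [Matrix.mul_apply, Matrix.diagonal_apply, Function.comp_apply, Matrix.star_apply,
      star_trivial, ite_mul, zero_mul, mul_ite, mul_zero, Finset.sum_ite_eq, Finset.sum_ite_eq',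
      Finset.mem_univ, if_true, ← hUdef]
    apply Finset.sum_congr rfl
    intro j _
    simp only [RCLike.ofReal_real_eq_id, id_eq]
    ring
  have jensen : ∀ i, Real.exp (M i i) ≤ ∑ j, (U i j * U i j) * Real.exp (hM.eigenvalues j) := by
    intro i
    rw [hdiag i]
    have := convexOn_exp.map_sum_le (t := Finset.univ)
      (w := fun j => U i j * U i j) (p := fun j => hM.eigenvalues j)
      (fun j _ => mul_self_nonneg _) (hrow i) (fun j _ => Set.mem_univ _)
    simpa [smul_eq_mul] using this
  calc ∑ i, Real.exp (M i i)
      ≤ ∑ i, ∑ j, (U i j * U i j) * Real.exp (hM.eigenvalues j) :=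
        Finset.sum_le_sum fun i _ => jensen i
    _ = ∑ j, (∑ i, U i j * U i j) * Real.exp (hM.eigenvalues j) := by
        rw [Finset.sum_comm]
        exact Finset.sum_congr rfl fun j _ => by rw [Finset.sum_mul]
    _ = ∑ j, Real.exp (hM.eigenvalues j) := by
        exact Finset.sum_congr rfl fun j _ => by rw [hcol j, one_mul]

/-- Conjugating by a unitary does not change the trace of the exponential. -/
private lemma trace_exp_conj {V : Matrix (Fin n) (Fin n) ℝ}
    (hV : V ∈ Matrix.unitaryGroup (Fin n) ℝ) (X : Matrix (Fin n) (Fin n) ℝ) :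
    (NormedSpace.exp (star V * X * V)).trace = (NormedSpace.exp X).trace := by
  have h1 : V * star V = 1 := (Matrix.mem_unitaryGroup_iff).mp hV
  have h2 : star V * V = 1 := (Matrix.mem_unitaryGroup_iff').mp hV
  have hinv : V⁻¹ = star V := Matrix.inv_eq_left_inv h2
  have hunit : IsUnit V := ⟨⟨V, star V, h1, h2⟩, rfl⟩
  have hconj : NormedSpace.exp (V⁻¹ * X * V) = V⁻¹ * NormedSpace.exp X * V :=
    Matrix.exp_conj' V X hunit
  rw [← hinv, hconj, Matrix.trace_mul_comm, ← Matrix.mul_assoc, hinv, h1, Matrix.one_mul]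

end Aux

private lemma holder_log_sum {n : ℕ} (hn : 0 < n) {a b P Q : ℝ} (ha : 0 ≤ a) (hb : 0 ≤ b)
    (hab : a + b = 1) (x y : Fin n → ℝ)
    (hxP : ∑ i, Real.exp (x i) ≤ P) (hyQ : ∑ i, Real.exp (y i) ≤ Q) :
    Real.log (∑ i, Real.exp (a * x i + b * y i)) ≤ a * Real.log P + b * Real.log Q := by
  have hne : Nonempty (Fin n) := ⟨⟨0, hn⟩⟩
  set SA : ℝ := ∑ i, Real.exp (x i) with hSAdef
  set SB : ℝ := ∑ i, Real.exp (y i) with hSBdef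
  have hSA : (0:ℝ) < SA := Finset.sum_pos (fun i _ => Real.exp_pos _) Finset.univ_nonempty
  have hSB : (0:ℝ) < SB := Finset.sum_pos (fun i _ => Real.exp_pos _) Finset.univ_nonempty
  have hP : (0:ℝ) < P := lt_of_lt_of_le hSA hxP
  have hQ : (0:ℝ) < Q := lt_of_lt_of_le hSB hyQ
  have hT : (0:ℝ) < ∑ i, Real.exp (a * x i + b * y i) :=
    Finset.sum_pos (fun i _ => Real.exp_pos _) Finset.univ_nonempty
  have hTle : (∑ i, Real.exp (a * x i + b * y i)) ≤ SA ^ a * SB ^ b := by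
    have step : ∀ i, Real.exp (a * x i + b * y i)
        ≤ SA ^ a * SB ^ b * (a * (Real.exp (x i) / SA) + b * (Real.exp (y i) / SB)) := by
      intro i
      have hgm : (Real.exp (x i) / SA) ^ a * (Real.exp (y i) / SB) ^ b
          ≤ a * (Real.exp (x i) / SA) + b * (Real.exp (y i) / SB) :=
        Real.geom_mean_le_arith_mean2_weighted ha hb
          (div_nonneg (Real.exp_pos _).le hSA.le) (div_nonneg (Real.exp_pos _).le hSB.le) hab
      have hexp : Real.exp (a * x i + b * y i)
          = SA ^ a * SB ^ b * ((Real.exp (x i) / SA) ^ a * (Real.exp (y i) / SB) ^ b) := by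
        rw [Real.exp_add, mul_comm a (x i), mul_comm b (y i), Real.exp_mul, Real.exp_mul,
          Real.div_rpow (Real.exp_pos _).le hSA.le, Real.div_rpow (Real.exp_pos _).le hSB.le]
        field_simp
      rw [hexp]
      exact mul_le_mul_of_nonneg_left hgm (by positivity)
    calc ∑ i, Real.exp (a * x i + b * y i)
        ≤ ∑ i, SA ^ a * SB ^ b * (a * (Real.exp (x i) / SA) + b * (Real.exp (y i) / SB)) :=
          Finset.sum_le_sum fun i _ => step i
      _ = SA ^ a * SB ^ b * (a * (SA / SA) + b * (SB / SB)) := by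
          rw [← Finset.mul_sum]
          congr 1
          rw [Finset.sum_add_distrib, ← Finset.mul_sum, ← Finset.mul_sum,
            ← Finset.sum_div, ← Finset.sum_div]
      _ = SA ^ a * SB ^ b := by
          rw [div_self hSA.ne', div_self hSB.ne', mul_one, mul_one, hab, mul_one]
  have hTPQ : (∑ i, Real.exp (a * x i + b * y i)) ≤ P ^ a * Q ^ b :=
    hTle.trans (mul_le_mul (Real.rpow_le_rpow hSA.le hxP ha)
      (Real.rpow_le_rpow hSB.le hyQ hb) (Real.rpow_nonneg hSB.le b)
      (Real.rpow_nonneg hP.le a))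
  have := Real.log_le_log hT hTPQ
  rwa [Real.log_mul (Real.rpow_pos_of_pos hP a).ne' (Real.rpow_pos_of_pos hQ b).ne',
    Real.log_rpow hP, Real.log_rpow hQ] at this

/-- For fixed `θ > 0`, the map `A ↦ (1/θ) log tr e^{θA}` is convex on the
space of real symmetric `n × n` matrices. -/
theorem logTraceExp_convexOn {n : ℕ} {θ : ℝ} (hθ : 0 < θ) :
    ConvexOn ℝ {A : Matrix (Fin n) (Fin n) ℝ | A.IsHermitian}
      (fun A => (1 / θ) * Real.log (NormedSpace.exp (θ • A)).trace) := by
  constructor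
  · intro A hA B hB a b ha hb hab
    exact ((isHermitian_smul_real hA a).add (isHermitian_smul_real hB b))
  · intro A hA B hB a b ha hb hab
    rcases Nat.eq_zero_or_pos n with hn | hn
    · have hempty : IsEmpty (Fin n) := by rw [hn]; infer_instance
      simp [Matrix.trace, hempty, Real.log_zero]
    simp only [Set.mem_setOf_eq] at hA hB
    show (1 / θ) * Real.log (NormedSpace.exp (θ • (a • A + b • B))).trace
      ≤ a * ((1 / θ) * Real.log (NormedSpace.exp (θ • A)).trace)
        + b * ((1 / θ) * Real.log (NormedSpace.exp (θ • B)).trace)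
    obtain ⟨x, y, hT, hxP, hyQ⟩ :
        ∃ x y : Fin n → ℝ,
          (NormedSpace.exp (θ • (a • A + b • B))).trace = ∑ i, Real.exp (a * x i + b * y i)
          ∧ (∑ i, Real.exp (x i)) ≤ (NormedSpace.exp (θ • A)).trace
          ∧ (∑ i, Real.exp (y i)) ≤ (NormedSpace.exp (θ • B)).trace := by
      have hθC : (θ • (a • A + b • B)).IsHermitian :=
        isHermitian_smul_real ((isHermitian_smul_real hA a).add (isHermitian_smul_real hB b)) θ
      have hV : (hθC.eigenvectorUnitary : Matrix (Fin n) (Fin n) ℝ)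
          ∈ Matrix.unitaryGroup (Fin n) ℝ := hθC.eigenvectorUnitary.2
      obtain ⟨V, hV, hdiagC⟩ :
          ∃ V, V ∈ Matrix.unitaryGroup (Fin n) ℝ ∧
            star V * (θ • (a • A + b • B)) * V = Matrix.diagonal hθC.eigenvalues :=
        ⟨_, hV, by simpa [RCLike.ofReal_real_eq_id] using hθC.conjStarAlgAut_star_eigenvectorUnitary⟩
      have hMA : (star V * (θ • A) * V).IsHermitian := by
        have h := isHermitian_smul_real hA θ
        unfold Matrix.IsHermitian
        simp only [Matrix.star_eq_conjTranspose, Matrix.conjTranspose_mul,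
          Matrix.conjTranspose_conjTranspose, h.eq, Matrix.mul_assoc]
      have hMB : (star V * (θ • B) * V).IsHermitian := by
        have h := isHermitian_smul_real hB θ
        unfold Matrix.IsHermitian
        simp only [Matrix.star_eq_conjTranspose, Matrix.conjTranspose_mul,
          Matrix.conjTranspose_conjTranspose, h.eq, Matrix.mul_assoc]
      have hsplit : Matrix.diagonal hθC.eigenvalues
          = a • (star V * (θ • A) * V) + b • (star V * (θ • B) * V) := by
        rw [← hdiagC]
        simp only [smul_add, Matrix.mul_add, Matrix.add_mul, Matrix.mul_smul, Matrix.smul_mul,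
          smul_smul]
        rw [mul_comm θ a, mul_comm θ b]
      refine ⟨fun i => (star V * (θ • A) * V) i i, fun i => (star V * (θ • B) * V) i i, ?_, ?_, ?_⟩
      · rw [trace_exp_eq_sum_exp hθC]
        refine Finset.sum_congr rfl fun i _ => ?_
        congr 1
        have := congrArg (fun N => N i i) hsplit
        simpa only [Matrix.diagonal_apply_eq, Matrix.add_apply, Matrix.smul_apply,
          smul_eq_mul] using this
      · have := sum_exp_diag_le_trace_exp hMA
        rwa [trace_exp_conj hV (θ • A)] at this
      · have := sum_exp_diag_le_trace_exp hMB
        rwa [trace_exp_conj hV (θ • B)] at this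
    have hlog := holder_log_sum hn ha hb hab x y hxP hyQ
    rw [hT]
    have hθinv : (0:ℝ) ≤ 1 / θ := by positivity
    calc (1 / θ) * Real.log (∑ i, Real.exp (a * x i + b * y i))
        ≤ (1 / θ) * (a * Real.log (NormedSpace.exp (θ • A)).trace
            + b * Real.log (NormedSpace.exp (θ • B)).trace) :=
          mul_le_mul_of_nonneg_left hlog hθinv
      _ = a * ((1 / θ) * Real.log (NormedSpace.exp (θ • A)).trace)
            + b * ((1 / θ) * Real.log (NormedSpace.exp (θ • B)).trace) := by ring
end

section
/- Given symmetric positive definite n×n matrices Σ₀, Σ₁, the matrix Φ := Σ₁^{1/2} (Σ₁^{1/2} Σ₀ Σ₁^{1/2})^{−1/2} Σ₁^{1/2} is symmetric positive definite and satisfies Φ Σ₀ Φ = Σ₁. -/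
open Matrix Classical

/-- The symmetric positive semidefinite square root of a matrix (junk value `0` if the
matrix is not positive semidefinite). -/
noncomputable def psdSqrt {n : ℕ} [DecidableEq (Fin n)]
    (M : Matrix (Fin n) (Fin n) ℝ) : Matrix (Fin n) (Fin n) ℝ :=
  if h : M.PosSemidef then
    (h.1.eigenvectorUnitary : Matrix (Fin n) (Fin n) ℝ) * diagonal (Real.sqrt ∘ h.1.eigenvalues) *
      star (h.1.eigenvectorUnitary : Matrix (Fin n) (Fin n) ℝ)
  else 0

noncomputable def Matrix.PosSemidef.sqrt {n : ℕ} [DecidableEq (Fin n)]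
    {M : Matrix (Fin n) (Fin n) ℝ} (h : M.PosSemidef) : Matrix (Fin n) (Fin n) ℝ :=
  (h.1.eigenvectorUnitary : Matrix (Fin n) (Fin n) ℝ) * diagonal (Real.sqrt ∘ h.1.eigenvalues) *
    star (h.1.eigenvectorUnitary : Matrix (Fin n) (Fin n) ℝ)

lemma Matrix.PosSemidef.posSemidef_sqrt {n : ℕ} [DecidableEq (Fin n)]
    {M : Matrix (Fin n) (Fin n) ℝ} (h : M.PosSemidef) : h.sqrt.PosSemidef := by
  unfold Matrix.PosSemidef.sqrt
  rw [Matrix.star_eq_conjTranspose]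
  exact (Matrix.PosSemidef.diagonal (fun i => Real.sqrt_nonneg _)).mul_mul_conjTranspose_same _

lemma Matrix.PosSemidef.sqrt_mul_self {n : ℕ} [DecidableEq (Fin n)]
    {M : Matrix (Fin n) (Fin n) ℝ} (h : M.PosSemidef) : h.sqrt * h.sqrt = M := by
  unfold Matrix.PosSemidef.sqrt
  have hU : star (h.1.eigenvectorUnitary : Matrix (Fin n) (Fin n) ℝ) *
      (h.1.eigenvectorUnitary : Matrix (Fin n) (Fin n) ℝ) = 1 := Unitary.coe_star_mul_self _
  have hD : diagonal (Real.sqrt ∘ h.1.eigenvalues) * diagonal (Real.sqrt ∘ h.1.eigenvalues)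
      = diagonal (RCLike.ofReal ∘ h.1.eigenvalues) := by
    rw [diagonal_mul_diagonal]
    congr 1
    funext i
    simp [Real.mul_self_sqrt (h.eigenvalues_nonneg i)]
  conv_rhs => rw [h.1.spectral_theorem, Unitary.conjStarAlgAut_apply]
  rw [← hD]
  simp only [Matrix.mul_assoc]
  rw [← Matrix.mul_assoc (star _) _ _, hU, Matrix.one_mul]

private lemma posDef_of_posSemidef_isUnit {n : ℕ} [DecidableEq (Fin n)]
    {M : Matrix (Fin n) (Fin n) ℝ} (hM : M.PosSemidef) (hU : IsUnit M) : M.PosDef := by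
  exact hM.posDef_iff_isUnit.mpr hU

private lemma sqrt_posDef {n : ℕ} [DecidableEq (Fin n)]
    {M : Matrix (Fin n) (Fin n) ℝ} (hM : M.PosDef) :
    (hM.posSemidef.sqrt).PosDef := by
  refine posDef_of_posSemidef_isUnit hM.posSemidef.posSemidef_sqrt ?_
  rw [Matrix.isUnit_iff_isUnit_det]
  have hdet : hM.posSemidef.sqrt.det * hM.posSemidef.sqrt.det = M.det := by
    rw [← Matrix.det_mul, hM.posSemidef.sqrt_mul_self]
  have h := hM.det_pos.ne'.isUnit
  rw [← hdet] at h
  exact isUnit_of_mul_isUnit_left h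

private lemma conj_posDef {n : ℕ} [DecidableEq (Fin n)]
    {A M : Matrix (Fin n) (Fin n) ℝ} (hM : M.PosDef) (hAh : A.IsHermitian)
    (hA : IsUnit A) : (A * M * A).PosDef := by
  rw [Matrix.posDef_iff_dotProduct_mulVec]
  constructor
  · show (A * M * A)ᴴ = A * M * A
    rw [Matrix.conjTranspose_mul, Matrix.conjTranspose_mul, hM.1.eq, hAh.eq,
      Matrix.mul_assoc]
  · intro x hx
    have hAx : A *ᵥ x ≠ 0 := fun h => hx <| by
      have := Matrix.mulVec_injective_iff_isUnit.mpr hA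
      simpa using this (h.trans (A.mulVec_zero).symm)
    have hsw : star (A *ᵥ x) = star x ᵥ* A := by rw [Matrix.star_mulVec, hAh.eq]
    have key : star x ⬝ᵥ (A * M * A) *ᵥ x = star (A *ᵥ x) ⬝ᵥ M *ᵥ (A *ᵥ x) := by
      rw [← Matrix.mulVec_mulVec, ← Matrix.mulVec_mulVec, Matrix.dotProduct_mulVec, ← hsw]
    rw [key]
    exact hM.dotProduct_mulVec_pos hAx

/-- For symmetric positive definite `Σ₀, Σ₁`, the matrix
`Φ := Σ₁^{1/2} (Σ₁^{1/2} Σ₀ Σ₁^{1/2})^{-1/2} Σ₁^{1/2}` is symmetric positive definite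
and satisfies `Φ Σ₀ Φ = Σ₁`. -/
theorem optimal_transport_map_posDef {n : ℕ} [DecidableEq (Fin n)]
    (S0 S1 : Matrix (Fin n) (Fin n) ℝ) (h0 : S0.PosDef) (h1 : S1.PosDef) :
    (psdSqrt S1 * (psdSqrt (psdSqrt S1 * S0 * psdSqrt S1))⁻¹ * psdSqrt S1).PosDef ∧
    (psdSqrt S1 * (psdSqrt (psdSqrt S1 * S0 * psdSqrt S1))⁻¹ * psdSqrt S1) * S0 *
      (psdSqrt S1 * (psdSqrt (psdSqrt S1 * S0 * psdSqrt S1))⁻¹ * psdSqrt S1) = S1 := by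
  have hA : psdSqrt S1 = h1.posSemidef.sqrt := dif_pos h1.posSemidef
  set A := h1.posSemidef.sqrt with hAdef
  have hApd : A.PosDef := sqrt_posDef h1
  have hBpd : (A * S0 * A).PosDef := conj_posDef h0 hApd.1 hApd.isUnit
  have hC : psdSqrt (A * S0 * A) = hBpd.posSemidef.sqrt := dif_pos hBpd.posSemidef
  set C := hBpd.posSemidef.sqrt with hCdef
  have hCpd : C.PosDef := sqrt_posDef hBpd
  have hCinv : C⁻¹.PosDef := hCpd.inv
  rw [hA, hC]
  constructor
  · exact conj_posDef hCinv hApd.1 hApd.isUnit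
  · have hCC : C * C = A * S0 * A := hBpd.posSemidef.sqrt_mul_self
    have hAA : A * A = S1 := h1.posSemidef.sqrt_mul_self
    have hdet : IsUnit C.det := hCpd.det_pos.ne'.isUnit
    have h1' : C⁻¹ * C = 1 := Matrix.nonsing_inv_mul C hdet
    have h2' : C * C⁻¹ = 1 := Matrix.mul_nonsing_inv C hdet
    have key : A * C⁻¹ * A * S0 * (A * C⁻¹ * A)
        = A * ((C⁻¹ * (C * C)) * C⁻¹) * A := by
      rw [hCC]; noncomm_ring
    have h3 : C⁻¹ * (C * C) = C := by rw [← Matrix.mul_assoc, h1', Matrix.one_mul]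
    rw [key, h3, h2', Matrix.mul_one, hAA]
end
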